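/- Let R = ⟨(n,2m)⟩ ⊂ Z⋊Z with n,m ≠ 0. The commensurator of R in Z⋊Z, i.e. {g : |g⁻¹Rg ∩ R| = ∞}, equals {(t₁,2t₂) : t₁,t₂ ∈ Z}, which is a subgroup isomorphic to Z×Z. -/

import Mathlib

/-- The Klein bottle group: underlying set `ℤ × ℤ` with multiplication
`(n₁,m₁)(n₂,m₂) = (n₁ + (-1)^{m₁} n₂, m₁ + m₂)`, identity `(0,0)`. -/
@[ext] structure KB where
  n : ℤ
  m : ℤ

namespace KB

instance : Mul KB := ⟨fun a b => ⟨a.n + (a.m.negOnePow : ℤ) * b.n, a.m + b.m⟩⟩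
instance : One KB := ⟨⟨0, 0⟩⟩
instance : Inv KB := ⟨fun a => ⟨((1 - a.m).negOnePow : ℤ) * a.n, -a.m⟩⟩

@[simp] theorem mul_def (a b : KB) :
    a * b = ⟨a.n + (a.m.negOnePow : ℤ) * b.n, a.m + b.m⟩ := rfl
@[simp] theorem one_def : (1 : KB) = ⟨0, 0⟩ := rfl
@[simp] theorem inv_def (a : KB) :
    a⁻¹ = ⟨((1 - a.m).negOnePow : ℤ) * a.n, -a.m⟩ := rfl

instance : Group KB where
  mul_assoc a b c := by
    ext <;> simp [Int.negOnePow_add] <;> ring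
  one_mul a := by ext <;> simp
  mul_one a := by ext <;> simp
  inv_mul_cancel a := by
    ext <;> simp [sub_eq_add_neg, Int.negOnePow_add]

end KB

lemma kb_zpow (n m : ℤ) (k : ℤ) : (KB.mk n (2 * m)) ^ k = KB.mk (k * n) (2 * (m * k)) := by
  induction k using Int.induction_on with
  | zero => simp
  | succ i ih =>
      rw [zpow_add_one, ih]
      ext <;> simp [Int.negOnePow_two_mul] <;> ring
  | pred i ih =>
      rw [zpow_sub_one, ih]
      ext <;> simp [Int.negOnePow_two_mul, sub_eq_add_neg, Int.negOnePow_add,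
        Int.negOnePow_neg] <;> ring

lemma kb_conj (n m a b k : ℤ) :
    (KB.mk a b)⁻¹ * (KB.mk n (2 * m)) ^ k * (KB.mk a b) =
      KB.mk ((b.negOnePow : ℤ) * (k * n)) (2 * (m * k)) := by
  rw [kb_zpow]
  ext <;> simp [Int.negOnePow_add, sub_eq_add_neg, Int.negOnePow_two_mul,
    Int.negOnePow_neg] <;> ring

theorem kb_commensurator (n m : ℤ) (hn : n ≠ 0) (hm : m ≠ 0) :
    {g : KB | (((fun x => g⁻¹ * x * g) '' (Subgroup.zpowers (KB.mk n (2 * m)) : Set KB)) ∩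
        (Subgroup.zpowers (KB.mk n (2 * m)) : Set KB)).Infinite} =
      {g : KB | ∃ t₁ t₂ : ℤ, g = KB.mk t₁ (2 * t₂)} ∧
    ∃ S : Subgroup KB,
      (S : Set KB) = {g : KB | ∃ t₁ t₂ : ℤ, g = KB.mk t₁ (2 * t₂)} ∧
        Nonempty (↥S ≃* Multiplicative (ℤ × ℤ)) := by
  constructor
  · ext g
    obtain ⟨a, b⟩ := g
    simp only [Set.mem_setOf_eq]
    constructor
    · intro h
      refine ⟨a, ?_⟩
      by_contra hb
      push_neg at hb
      -- b is odd
      have hodd : ¬ Even b := by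
        rintro ⟨t, ht⟩
        exact hb t (by ext <;> simp [ht] <;> ring)
      have hbo : (b.negOnePow : ℤ) = -1 := by
        rw [Int.negOnePow_odd _ (Int.not_even_iff_odd.mp hodd)]; rfl
      apply h
      apply Set.Finite.subset (Set.finite_singleton (1 : KB))
      rintro x ⟨⟨y, ⟨j, rfl⟩, rfl⟩, ⟨i, hi⟩⟩
      simp only [SetLike.mem_coe] at *
      rw [kb_conj, hbo] at hi ⊢
      rw [kb_zpow] at hi
      have h1 : i * n = -1 * (j * n) := congrArg KB.n hi
      have h2 : 2 * (m * i) = 2 * (m * j) := congrArg KB.m hi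
      have hij : i = j := by
        have := mul_left_cancel₀ (two_ne_zero) h2
        exact mul_left_cancel₀ hm this
      subst hij
      have : i * n = 0 := by linarith
      have : i = 0 := by
        rcases mul_eq_zero.mp this with h | h
        · exact h
        · exact absurd h hn
      subst this
      simp
    · rintro ⟨t₁, t₂, hg⟩
      have hb : (b.negOnePow : ℤ) = 1 := by
        have : b = 2 * t₂ := congrArg KB.m hg
        rw [this, Int.negOnePow_two_mul]; rfl
      apply Set.infinite_of_injective_forall_mem
        (f := fun k : ℤ => (KB.mk n (2 * m)) ^ k)
      · intro i j hij
        dsimp only at hij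
        rw [kb_zpow, kb_zpow] at hij
        have := congrArg KB.n hij
        simpa using mul_right_cancel₀ hn this
      · intro k
        refine ⟨⟨(KB.mk n (2 * m)) ^ k, ⟨k, rfl⟩, ?_⟩, ⟨k, rfl⟩⟩
        dsimp only
        rw [kb_conj, hb, kb_zpow]
        simp
  · -- subgroup part
    have hφmem : ∀ p q : Multiplicative (ℤ × ℤ),
        (KB.mk (Multiplicative.toAdd p).1 (2 * (Multiplicative.toAdd p).2)) *
        (KB.mk (Multiplicative.toAdd q).1 (2 * (Multiplicative.toAdd q).2)) =
        (KB.mk (Multiplicative.toAdd (p * q)).1 (2 * (Multiplicative.toAdd (p * q)).2)) := by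
      intro p q
      ext <;> simp [Int.negOnePow_two_mul] <;> ring
    let φ : Multiplicative (ℤ × ℤ) →* KB :=
      { toFun := fun p => KB.mk (Multiplicative.toAdd p).1 (2 * (Multiplicative.toAdd p).2)
        map_one' := by ext <;> simp
        map_mul' := fun p q => (hφmem p q).symm }
    have hinj : Function.Injective φ := by
      intro p q h
      have h1 := congrArg KB.n h
      have h2 := congrArg KB.m h
      simp only [φ, MonoidHom.coe_mk, OneHom.coe_mk] at h1 h2
      have h2' : (Multiplicative.toAdd p).2 = (Multiplicative.toAdd q).2 :=
        mul_left_cancel₀ two_ne_zero h2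
      have : Multiplicative.toAdd p = Multiplicative.toAdd q := Prod.ext h1 h2'
      exact Multiplicative.toAdd.injective this
    refine ⟨φ.range, ?_, ⟨(MonoidHom.ofInjective hinj).symm⟩⟩
    ext g
    simp only [MonoidHom.coe_range, Set.mem_range, Set.mem_setOf_eq]
    constructor
    · rintro ⟨p, rfl⟩
      exact ⟨_, _, rfl⟩
    · rintro ⟨t₁, t₂, rfl⟩
      exact ⟨Multiplicative.ofAdd (t₁, t₂), rfl⟩
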